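/- For data y ∈ ℝ^N, nonnegative weights w ∈ ℝ^N, and α > 0, the minimum of the L1-TV functional T(x) = α Σ_{n=1}^{N-1} |x_n − x_{n+1}| + Σ_{n=1}^N w_n |x_n − y_n| over all x ∈ ℝ^N equals the minimum over x ∈ V^N, where V = Val(y) is the (finite) set of values attained by y. In particular there exists a global minimizer all of whose entries are values of the data. -/

import Mathlib

open Finset

/-- The univariate `L¹`-TV functional for real-valued data `y`, weights `w`
and regularization parameter `α`. -/
noncomputable def l1tvReal (N : ℕ) (α : ℝ) (w y : Fin N → ℝ) (x : Fin N → ℝ) : ℝ :=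
  α * ∑ i : Fin (N - 1),
      |x ⟨i, by have := i.isLt; omega⟩ - x ⟨(i : ℕ) + 1, by have := i.isLt; omega⟩| +
    ∑ n, w n * |x n - y n|

/-! If a value `v` of a signal `x` is not a data value, replace all its occurrences by a
parameter `t`. Every term of the functional then is a constant or `|t - b|` with `b` in the finite
set `K` of data values and other values of `x`, so as a function of `t` it is affine between
consecutive points of `K` and grows away from `K` outside their hull; hence some `t ∈ K` does at
least as well as `t = v`. This removes one non-data value, so every signal is dominated by one
with data values only, and a minimizer over the finitely many of those is a global minimizer. -/

/-- `f` is affine on every gap of `K` and decreases towards `K` outside its hull. -/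
structure HasKinksIn (K : Set ℝ) (f : ℝ → ℝ) : Prop where
  le_of_mem_lowerBounds : ∀ ⦃t m⦄, t ≤ m → m ∈ lowerBounds K → f m ≤ f t
  le_of_mem_upperBounds : ∀ ⦃t m⦄, m ≤ t → m ∈ upperBounds K → f m ≤ f t
  affine_of_gap : ∀ ⦃p t q⦄, p ≤ t → t ≤ q → (∀ b ∈ K, b ≤ p ∨ q ≤ b) →
    (q - p) * f t = (q - t) * f p + (t - p) * f q

namespace HasKinksIn

variable {K : Set ℝ} {f g : ℝ → ℝ}

theorem const (C : ℝ) : HasKinksIn K fun _ => C where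
  le_of_mem_lowerBounds _ _ _ _ := le_rfl
  le_of_mem_upperBounds _ _ _ _ := le_rfl
  affine_of_gap _ _ _ _ _ _ := by ring

theorem abs_sub {b : ℝ} (hb : b ∈ K) : HasKinksIn K fun t => |t - b| where
  le_of_mem_lowerBounds t m htm hm := by
    have := hm hb
    rw [abs_of_nonpos (by linarith), abs_of_nonpos (by linarith)]
    linarith
  le_of_mem_upperBounds t m hmt hm := by
    have := hm hb
    rw [abs_of_nonneg (by linarith), abs_of_nonneg (by linarith)]
    linarith
  affine_of_gap p t q hpt htq hgap := by
    rcases hgap b hb with h | h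
    · rw [abs_of_nonneg (by linarith), abs_of_nonneg (by linarith), abs_of_nonneg (by linarith)]
      ring
    · rw [abs_of_nonpos (by linarith), abs_of_nonpos (by linarith), abs_of_nonpos (by linarith)]
      ring

theorem add (hf : HasKinksIn K f) (hg : HasKinksIn K g) : HasKinksIn K fun t => f t + g t where
  le_of_mem_lowerBounds _ _ htm hm :=
    add_le_add (hf.le_of_mem_lowerBounds htm hm) (hg.le_of_mem_lowerBounds htm hm)
  le_of_mem_upperBounds _ _ hmt hm :=
    add_le_add (hf.le_of_mem_upperBounds hmt hm) (hg.le_of_mem_upperBounds hmt hm)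
  affine_of_gap _ _ _ hpt htq hgap := by
    linear_combination hf.affine_of_gap hpt htq hgap + hg.affine_of_gap hpt htq hgap

theorem const_mul (hf : HasKinksIn K f) {c : ℝ} (hc : 0 ≤ c) :
    HasKinksIn K fun t => c * f t where
  le_of_mem_lowerBounds _ _ htm hm :=
    mul_le_mul_of_nonneg_left (hf.le_of_mem_lowerBounds htm hm) hc
  le_of_mem_upperBounds _ _ hmt hm :=
    mul_le_mul_of_nonneg_left (hf.le_of_mem_upperBounds hmt hm) hc
  affine_of_gap _ _ _ hpt htq hgap := by
    linear_combination c * hf.affine_of_gap hpt htq hgap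

theorem sum {ι : Type*} (s : Finset ι) {f : ι → ℝ → ℝ}
    (hf : ∀ i ∈ s, HasKinksIn K (f i)) : HasKinksIn K fun t => ∑ i ∈ s, f i t where
  le_of_mem_lowerBounds _ _ htm hm :=
    sum_le_sum fun i hi => (hf i hi).le_of_mem_lowerBounds htm hm
  le_of_mem_upperBounds _ _ hmt hm :=
    sum_le_sum fun i hi => (hf i hi).le_of_mem_upperBounds hmt hm
  affine_of_gap _ _ _ hpt htq hgap := by
    rw [mul_sum, mul_sum, mul_sum, ← sum_add_distrib]
    exact sum_congr rfl fun i hi => (hf i hi).affine_of_gap hpt htq hgap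

theorem exists_mem_le {K : Finset ℝ} (hf : HasKinksIn K f) (hK : K.Nonempty) (t : ℝ) :
    ∃ k ∈ K, f k ≤ f t := by
  by_cases htK : t ∈ K
  · exact ⟨t, htK, le_rfl⟩
  by_cases hlow : t ∈ lowerBounds (K : Set ℝ)
  · exact ⟨K.min' hK, K.min'_mem hK,
      hf.le_of_mem_lowerBounds (hlow (K.min'_mem hK)) fun b hb => K.min'_le b hb⟩
  by_cases hup : t ∈ upperBounds (K : Set ℝ)
  · exact ⟨K.max' hK, K.max'_mem hK,
      hf.le_of_mem_upperBounds (hup (K.max'_mem hK)) fun b hb => K.le_max' b hb⟩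
  simp only [mem_lowerBounds, mem_upperBounds, mem_coe, not_forall, not_le] at hlow hup
  obtain ⟨b₁, hb₁K, hb₁⟩ := hlow
  obtain ⟨b₂, hb₂K, hb₂⟩ := hup
  have hbelow : (K.filter (· < t)).Nonempty := ⟨b₁, mem_filter.2 ⟨hb₁K, hb₁⟩⟩
  have habove : (K.filter (t < ·)).Nonempty := ⟨b₂, mem_filter.2 ⟨hb₂K, hb₂⟩⟩
  set p := (K.filter (· < t)).max' hbelow
  set q := (K.filter (t < ·)).min' habove
  obtain ⟨hpK, hpt⟩ := mem_filter.1 ((K.filter (· < t)).max'_mem hbelow)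
  obtain ⟨hqK, htq⟩ := mem_filter.1 ((K.filter (t < ·)).min'_mem habove)
  have hgap : ∀ b ∈ (K : Set ℝ), b ≤ p ∨ q ≤ b := fun b hb =>
    (lt_or_gt_of_ne (ne_of_mem_of_not_mem hb htK)).imp
      (fun h => le_max' _ b (mem_filter.2 ⟨hb, h⟩))
      (fun h => min'_le _ b (mem_filter.2 ⟨hb, h⟩))
  have haff := hf.affine_of_gap hpt.le htq.le hgap
  rcases le_total (f p) (f q) with h | h
  · exact ⟨p, hpK, by nlinarith⟩
  · exact ⟨q, hqK, by nlinarith⟩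

end HasKinksIn

open Function

theorem hasKinksIn_abs_update_sub {K : Set ℝ} {v a b : ℝ} (ha : a ∈ insert v K)
    (hb : b ∈ insert v K) : HasKinksIn K fun t => |update id v t a - update id v t b| := by
  rcases eq_or_ne v a with rfl | hva <;> rcases eq_or_ne v b with rfl | hvb
  · simpa only [update_self, sub_self, abs_zero] using HasKinksIn.const 0
  · simpa only [update_self, update_of_ne hvb.symm, id_eq] using
      HasKinksIn.abs_sub (hb.resolve_left hvb.symm)
  · simp only [update_self, update_of_ne hva.symm, id_eq]
    simp_rw [abs_sub_comm a]
    exact HasKinksIn.abs_sub (ha.resolve_left hva.symm)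
  · simpa only [update_of_ne hva.symm, update_of_ne hvb.symm, id_eq] using
      HasKinksIn.const |a - b|

theorem hasKinksIn_l1tvReal_update_comp {N : ℕ} {α : ℝ} {w y x : Fin N → ℝ} {K : Set ℝ}
    {v : ℝ} (hα : 0 ≤ α) (hw : ∀ n, 0 ≤ w n) (hvK : v ∉ K) (hx : ∀ n, x n ∈ insert v K)
    (hy : ∀ n, y n ∈ K) : HasKinksIn K fun t => l1tvReal N α w y (update id v t ∘ x) := by
  refine .add (.const_mul (.sum _ fun i _ => hasKinksIn_abs_update_sub (hx _) (hx _)) hα)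
    (.sum _ fun n _ => .const_mul ?_ (hw n))
  have hyn (t : ℝ) : update id v t (y n) = y n :=
    update_of_ne (ne_of_mem_of_not_mem (hy n) hvK) _ _
  simpa only [comp_apply, hyn] using
    hasKinksIn_abs_update_sub (hx n) (Set.mem_insert_of_mem v (hy n))

theorem image_update_comp_sdiff_subset {ι α : Type*} [Fintype ι] [DecidableEq α]
    {V : Finset α} {x : ι → α} {v k : α} (hk : k ∈ V ∪ (univ.image x).erase v) :
    univ.image (update id v k ∘ x) \ V ⊆ (univ.image x \ V).erase v := by
  intro u hu
  obtain ⟨hu, huV⟩ := mem_sdiff.1 hu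
  obtain ⟨n, -, rfl⟩ := mem_image.1 hu
  rcases eq_or_ne (x n) v with hxn | hxn
  · simp only [comp_apply, hxn, update_self] at huV ⊢
    obtain ⟨hkv, hkx⟩ := mem_erase.1 ((mem_union.1 hk).resolve_left huV)
    exact mem_erase.2 ⟨hkv, mem_sdiff.2 ⟨hkx, huV⟩⟩
  · simp only [comp_apply, update_of_ne hxn, id_eq] at huV ⊢
    exact mem_erase.2 ⟨hxn, mem_sdiff.2 ⟨mem_image_of_mem x (mem_univ n), huV⟩⟩

theorem exists_forall_mem_l1tvReal_le {N : ℕ} {α : ℝ} {w y : Fin N → ℝ} (hα : 0 ≤ α)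
    (hw : ∀ n, 0 ≤ w n) {V : Finset ℝ} (hy : ∀ n, y n ∈ V) (x : Fin N → ℝ) :
    ∃ z, (∀ n, z n ∈ V) ∧ l1tvReal N α w y z ≤ l1tvReal N α w y x := by
  induction hc : (univ.image x \ V).card using Nat.strong_induction_on generalizing x with
  | _ c ih =>
  by_cases hxV : ∀ n, x n ∈ V
  · exact ⟨x, hxV, le_rfl⟩
  obtain ⟨n₀, hn₀⟩ := not_forall.1 hxV
  set K := V ∪ (univ.image x).erase (x n₀)
  have hvK : x n₀ ∉ K := by simp [K, hn₀]
  have hxK (n : Fin N) : x n ∈ insert (x n₀) (K : Set ℝ) := by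
    by_cases h : x n = x n₀ <;> simp [K, h]
  have hyK : ∀ n, y n ∈ (K : Set ℝ) := fun n => by simp [K, hy n]
  obtain ⟨k, hkK, hk⟩ := (hasKinksIn_l1tvReal_update_comp hα hw (mod_cast hvK) hxK
    hyK).exists_mem_le ⟨y n₀, hyK n₀⟩ (x n₀)
  have hlt : (univ.image (update id (x n₀) k ∘ x) \ V).card < c :=
    hc ▸ (card_le_card (image_update_comp_sdiff_subset hkK)).trans_lt
      (card_erase_lt_of_mem (by simp [hn₀]))
  obtain ⟨z, hzV, hz⟩ := ih _ hlt _ rfl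
  refine ⟨z, hzV, hz.trans (hk.trans_eq ?_)⟩
  rw [show update id (x n₀) (x n₀) = id from update_eq_self (x n₀) id, id_comp]

theorem l1tv_real_min_attained_on_data_values
    (N : ℕ) (y w : Fin N → ℝ) (hw : ∀ n, 0 ≤ w n) (α : ℝ) (hα : 0 < α) :
    ∃ x' : Fin N → ℝ, (∀ n, x' n ∈ Set.range y) ∧
      ∀ x : Fin N → ℝ, l1tvReal N α w y x' ≤ l1tvReal N α w y x := by
  have hyV : ∀ n, y n ∈ univ.image y := fun n => mem_image_of_mem y (mem_univ n)
  obtain ⟨x', hx'V, hx'⟩ := (Fintype.piFinset fun _ => univ.image y).exists_min_image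
    (l1tvReal N α w y) ⟨y, Fintype.mem_piFinset.2 hyV⟩
  refine ⟨x', fun n => by simpa using Fintype.mem_piFinset.1 hx'V n, fun x => ?_⟩
  obtain ⟨z, hzV, hz⟩ := exists_forall_mem_l1tvReal_le hα.le hw hyV x
  exact (hx' z (Fintype.mem_piFinset.2 hzV)).trans hz
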